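/- For every curve φ in the admissible class U, the function 𝓕(φ) belongs to Y; that is, 𝓕(φ) is continuous on [0,1], satisfies 𝓕(φ)(0) = 𝓕(φ)(1) = 0, and is differentiable at α = 0, s̄ and 1 (one-sided at 0 and 1). -/

import Mathlib

/-!
Writing `t = φ'/|φ'|`, all projections in `𝓕(φ)` combine into one tangential term:
`𝓕(φ)(α) = ∇E(φ(α)) + c(α) t(α)` for a scalar `c`. Along a `C¹` curve `∇E ∘ φ` is
differentiable, but `t` is only continuous. At `α = 0, s̄, 1` however both `c(α)` and the
vector `w(α) ∇E(φ(s̄)) − ∇E(φ(α))` inside its inner-product part vanish, where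
`w(α) = α(α−1)/(s̄(s̄−1))`, and a bilinear expression `B(f, v)` with `f` differentiable,
`f(a) = 0` and `v` merely continuous is differentiable at `a`. The boundary values vanish
because `y_M^A`, `y_M^B` are critical points and `Γ(φ)(0) = Γ(φ)(1) = 0`.
-/

noncomputable section

open Set
open scoped RealInnerProductSpace Topology

variable {H : Type*} [NormedAddCommGroup H] [InnerProductSpace ℝ H] [CompleteSpace H]

/-- Orthogonal projection of `y` onto the span of `v` (`P_v y`). -/
def Pproj (v y : H) : H := ⟪y, ‖v‖⁻¹ • v⟫ • (‖v‖⁻¹ • v)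

/-- Projection of `y` onto the orthogonal complement of `v` (`P_v^⊥ y`). -/
def Pperp (v y : H) : H := y - Pproj v y

/-- `f` is `C¹` on `[a,b]` with derivative `f'`. -/
def C1On {F : Type*} [NormedAddCommGroup F] [NormedSpace ℝ F] (a b : ℝ) (f f' : ℝ → F) : Prop :=
  (∀ α ∈ Icc a b, HasDerivWithinAt f (f' α) (Icc a b) α) ∧ ContinuousOn f' (Icc a b)

/-- `f` is `C²` on `[a,b]`. -/
def C2On {F : Type*} [NormedAddCommGroup F] [NormedSpace ℝ F] (a b : ℝ) (f f' f'' : ℝ → F) : Prop :=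
  C1On a b f f' ∧ C1On a b f' f''

/-- The length `L(φ)` of a curve with derivative `φ'`. -/
def len {F : Type*} [NormedAddCommGroup F] (φ' : ℝ → F) : ℝ := ∫ s in (0:ℝ)..1, ‖φ' s‖

/-- `Γ(φ)(α) = ∫₀^α |φ'| − α L(φ)`. -/
def Gam {F : Type*} [NormedAddCommGroup F] (φ' : ℝ → F) (α : ℝ) : ℝ :=
  (∫ s in (0:ℝ)..α, ‖φ' s‖) - α * len φ'

/-- The admissible class `U` of regular curves joining `yA` to `yB`. -/
def InU (yA yB : H) (φ φ' : ℝ → H) : Prop :=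
  C1On 0 1 φ φ' ∧ φ 0 = yA ∧ φ 1 = yB ∧ ∀ α ∈ Icc (0:ℝ) 1, φ' α ≠ 0

/-- The MEP equations. -/
def SolvesMEP (E : H → ℝ) (φ φ' : ℝ → H) : Prop :=
  (∀ α ∈ Icc (0:ℝ) 1, Pperp (φ' α) (gradient E (φ α)) = 0) ∧
  (∀ α ∈ Icc (0:ℝ) 1, Gam φ' α = 0)

/-- Strong local minimizer. -/
def IsStrongMin (E : H → ℝ) (hess : H → H →L[ℝ] H) (y : H) : Prop :=
  gradient E y = 0 ∧ ∃ c > 0, ∀ u : H, c * ‖u‖ ^ 2 ≤ ⟪hess y u, u⟫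

/-- Index-1 saddle point. -/
def IsIndex1Saddle (E : H → ℝ) (hess : H → H →L[ℝ] H) (y : H) : Prop :=
  gradient E y = 0 ∧
    ∃ v₁ : H, v₁ ≠ 0 ∧ (∃ l < (0:ℝ), hess y v₁ = l • v₁) ∧
      ∃ c > 0, ∀ u : H, ⟪u, v₁⟫ = 0 → c * ‖u‖ ^ 2 ≤ ⟪hess y u, u⟫

/-- Assumption (A). -/
def AssumpA (E : H → ℝ) (hess : H → H →L[ℝ] H) (yA yB : H)
    (φb φb' φb'' : ℝ → H) (sbar : ℝ) : Prop :=
  C2On 0 1 φb φb' φb'' ∧ InU yA yB φb φb' ∧ SolvesMEP E φb φb' ∧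
  sbar ∈ Ioo (0:ℝ) 1 ∧
  IsStrongMin E hess yA ∧ IsStrongMin E hess yB ∧
  IsIndex1Saddle E hess (φb sbar) ∧
  ∀ α ∈ Icc (0:ℝ) 1, gradient E (φb α) = 0 → α = 0 ∨ α = sbar ∨ α = 1

/-- `λ̄(α) = L(φ̄)⁻² (∇E(φ̄(α)), φ̄'(α))`. -/
def lamBar (E : H → ℝ) (φ φ' : ℝ → H) (α : ℝ) : ℝ :=
  ((len φ') ^ 2)⁻¹ * ⟪gradient E (φ α), φ' α⟫

/-- The MEP operator `𝓕`. -/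
def Fop (E : H → ℝ) (sbar σA σB : ℝ) (φ φ' : ℝ → H) (α : ℝ) : H :=
  Pperp (φ' α) (gradient E (φ α))
    - ((‖φ' α‖ - len φ') / len φ') • Pproj (φ' α) (gradient E (φ α))
    + (α * (α - 1) * ‖φ' α‖ / (sbar * (sbar - 1) * len φ')) •
        Pproj (φ' α) (gradient E (φ sbar))
    + ((σA + σB) * (Gam φ' α - α * (α - 1) / (sbar * (sbar - 1)) * Gam φ' sbar)) •
        (‖φ' α‖⁻¹ • φ' α)

/-- Membership in the image space `Y`. -/
def MemY {F : Type*} [NormedAddCommGroup F] [NormedSpace ℝ F] (sbar : ℝ) (f : ℝ → F) : Prop :=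
  ContinuousOn f (Icc (0:ℝ) 1) ∧ f 0 = 0 ∧ f 1 = 0 ∧
  DifferentiableWithinAt ℝ f (Icc (0:ℝ) 1) 0 ∧
  DifferentiableWithinAt ℝ f (Icc (0:ℝ) 1) sbar ∧
  DifferentiableWithinAt ℝ f (Icc (0:ℝ) 1) 1

/-- Membership in the space `X`. -/
def MemX {F : Type*} [NormedAddCommGroup F] [NormedSpace ℝ F] (ψ ψ' : ℝ → F) : Prop :=
  C1On 0 1 ψ ψ' ∧ ψ 0 = 0 ∧ ψ 1 = 0

/-- The `C¹` (and `X`) norm. -/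
def normC1 {F : Type*} [NormedAddCommGroup F] (ψ ψ' : ℝ → F) : ℝ :=
  (⨆ α : Icc (0:ℝ) 1, ‖ψ (α : ℝ)‖) + ⨆ α : Icc (0:ℝ) 1, ‖ψ' (α : ℝ)‖

/-- The weighted norm on `Y`. -/
def normY {F : Type*} [NormedAddCommGroup F] (sbar : ℝ) (f : ℝ → F) : ℝ :=
  (⨆ α : Ioo (0:ℝ) 1, ‖f (α : ℝ)‖ / |(α : ℝ) * ((α : ℝ) - 1)|) +
    ⨆ α : ↥(Icc (0:ℝ) 1 \ {sbar}), ‖f (α : ℝ) - f sbar‖ / |(α : ℝ) - sbar|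

/-- `∫₀¹ (φ̄'(s), ψ'(s))/|φ̄'(s)| ds`. -/
def gInt (φb' ψ' : ℝ → H) : ℝ := ∫ s in (0:ℝ)..1, ⟪φb' s, ψ' s⟫ / ‖φb' s‖

/-- `g_ψ(α)` (the linearisation `δΓ(φ̄)ψ`). -/
def gFun (φb' ψ' : ℝ → H) (α : ℝ) : ℝ :=
  (∫ s in (0:ℝ)..α, ⟪φb' s, ψ' s⟫ / ‖φb' s‖) - α * gInt φb' ψ'

/-- `g_ψ'(α)`. -/
def gFun' (φb' ψ' : ℝ → H) (α : ℝ) : ℝ := ⟪φb' α, ψ' α⟫ / ‖φb' α‖ - gInt φb' ψ'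

/-- The linearised MEP operator `T = δ𝓕(φ̄)`. -/
def Tlin (E : H → ℝ) (hess : H → H →L[ℝ] H) (φb φb' : ℝ → H)
    (sbar σA σB : ℝ) (ψ ψ' : ℝ → H) (α : ℝ) : H :=
  Pperp (φb' α) (hess (φb α) (ψ α) - lamBar E φb φb' α • ψ' α)
    + (α * (α - 1) / (sbar * (sbar - 1))) • Pproj (φb' α) (hess (φb sbar) (ψ sbar))
    + ((σA + σB) * (gFun φb' ψ' α - α * (α - 1) / (sbar * (sbar - 1)) * gFun φb' ψ' sbar)
        - lamBar E φb φb' α * gFun' φb' ψ' α) • (‖φb' α‖⁻¹ • φb' α)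

/-- Assumption (B). -/
def AssumpB (hess : H → H →L[ℝ] H) (yA yB vA vB : H) (σA σB : ℝ) : Prop :=
  hess yA vA = σA • vA ∧ hess yB vB = σB • vB ∧
  (∀ μ ∈ spectrum ℝ (hess yA), σA ≤ μ) ∧
  (∀ μ ∈ spectrum ℝ (hess yB), σB ≤ μ) ∧
  (∃ ε > 0, ∀ μ ∈ spectrum ℝ (hess yA), μ ≠ σA → σA + ε ≤ μ) ∧
  (∃ ε > 0, ∀ μ ∈ spectrum ℝ (hess yB), μ ≠ σB → σB + ε ≤ μ) ∧
  (∀ u : H, hess yA u = σA • u → ∃ c : ℝ, u = c • vA) ∧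
  (∀ u : H, hess yB u = σB • u → ∃ c : ℝ, u = c • vB)

/-- `P_v` as a continuous linear map. -/
def projL (v : H) : H →L[ℝ] H := (innerSL ℝ (‖v‖⁻¹ • v)).smulRight (‖v‖⁻¹ • v)

/-- `P_v^⊥` as a continuous linear map. -/
def projPerpL (v : H) : H →L[ℝ] H := ContinuousLinearMap.id ℝ H - projL v

/-- `B(α) = P⊥ ∇²E(φ̄(α)) P⊥`. -/
def Bop (hess : H → H →L[ℝ] H) (φb φb' : ℝ → H) (α : ℝ) : H →L[ℝ] H :=
  (projPerpL (φb' α)).comp ((hess (φb α)).comp (projPerpL (φb' α)))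

/-- `D(α) y = −(y,t'(α))t(α) − (y,t(α))t'(α)`. -/
def Dop (t t' : ℝ → H) (α : ℝ) : H →L[ℝ] H :=
  -((innerSL ℝ (t' α)).smulRight (t α)) - (innerSL ℝ (t α)).smulRight (t' α)

/-- The operator `A(α)`. -/
def Aop {K : Type*} [NormedAddCommGroup K] [InnerProductSpace ℝ K] [CompleteSpace K]
    (E : H → ℝ) (hess : H → H →L[ℝ] H) (φb φb' t' : ℝ → H)
    (Q Q' : ℝ → K →L[ℝ] H) (α : ℝ) : K →L[ℝ] K :=
  (ContinuousLinearMap.adjoint (Q α)).comp ((Bop hess φb φb' α).comp (Q α))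
    - lamBar E φb φb' α •
        ((ContinuousLinearMap.adjoint (Q α)).comp
            ((Dop (fun s => ‖φb' s‖⁻¹ • φb' s) t' α).comp (Q α))
          - (ContinuousLinearMap.adjoint (Q α)).comp (Q' α))

/-- `ω_S`. -/
def omegaS (hess : H → H →L[ℝ] H) (yS : H) : ℝ :=
  sInf {l : ℝ | l ∈ spectrum ℝ (hess yS) ∧ 0 < l}

/-- `ω_B`. -/
def omegaB (hess : H → H →L[ℝ] H) (yB : H) (σB : ℝ) : ℝ :=
  sInf {l : ℝ | l ∈ spectrum ℝ (hess yB) ∧ l ≠ σB}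

/-- The tube `𝒰_ε` around the path. -/
def Utube (φb : ℝ → H) (ε : ℝ) : Set H := {y : H | ∃ α ∈ Icc (0:ℝ) 1, ‖y - φb α‖ ≤ ε}

/-- Restriction of a second derivative to a subspace. -/
def restrict2 (K : Submodule ℝ H) (T : H →L[ℝ] H →L[ℝ] ℝ) : K →L[ℝ] K →L[ℝ] ℝ :=
  (((ContinuousLinearMap.compL ℝ K H ℝ).flip K.subtypeL)).comp (T.comp K.subtypeL)

/-- `C⁰` distance between `E'` (on the subspace `K`) and `E`, over `S`. -/
def subC0dist (K : Submodule ℝ H) (E : H → ℝ) (E' : K → ℝ) (S : Set K) : ℝ :=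
  ⨆ y : S, |E' y.1 - E (y.1 : H)|

/-- `C¹` distance between `E'` (on the subspace `K`) and `E`, over `S`. -/
def subC1dist (K : Submodule ℝ H) (E : H → ℝ) (E' : K → ℝ) (S : Set K) : ℝ :=
  subC0dist K E E' S +
    ⨆ y : S, ‖fderiv ℝ E' y.1 - (fderiv ℝ E (y.1 : H)).comp K.subtypeL‖

/-- `C²` distance between `E'` (on the subspace `K`) and `E`, over `S`. -/
def subC2dist (K : Submodule ℝ H) (E : H → ℝ) (E' : K → ℝ) (S : Set K) : ℝ :=
  subC1dist K E E' S +
    ⨆ y : S, @norm (K →L[ℝ] K →L[ℝ] ℝ)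
        (ContinuousLinearMap.hasOpNorm (𝕜 := ℝ) (𝕜₂ := ℝ) (E := K) (F := K →L[ℝ] ℝ))
        (fderiv ℝ (fun z => fderiv ℝ E' z) y.1
        - restrict2 K (fderiv ℝ (fun z => fderiv ℝ E z) (y.1 : H)))

open Asymptotics

theorem HasDerivWithinAt.clm_apply₂_of_eq_zero {F G K : Type*}
    [NormedAddCommGroup F] [NormedSpace ℝ F] [NormedAddCommGroup G] [NormedSpace ℝ G]
    [NormedAddCommGroup K] [NormedSpace ℝ K]
    (B : F →L[ℝ] G →L[ℝ] K) {f : ℝ → F} {v : ℝ → G} {f' : F} {s : Set ℝ} {a : ℝ}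
    (hf : HasDerivWithinAt f f' s a) (hf0 : f a = 0) (hv : ContinuousWithinAt v s a) :
    HasDerivWithinAt (fun α => B (f α) (v α)) (B f' (v a)) s a := by
  have hf_bigO : f =O[𝓝[s] a] fun α => α - a := by
    simpa [hf0, Function.comp_def] using hf.isBigO_sub
  have hv_littleO : (fun α => v α - v a) =o[𝓝[s] a] fun _ => (1 : ℝ) := by
    rw [isLittleO_one_iff]
    simpa using hv.tendsto.sub_const (v a)
  have hremainder : (fun α => B (f α) (v α - v a)) =o[𝓝[s] a] fun α => α - a :=
    calc (fun α => B (f α) (v α - v a))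
        =O[𝓝[s] a] fun α => ‖f α‖ * ‖v α - v a‖ :=
          .of_bound ‖B‖ (.of_forall fun α => by
            simpa [mul_assoc] using B.le_opNorm₂ (f α) (v α - v a))
      _ =o[𝓝[s] a] fun α => α - a := by
          simpa using hf_bigO.norm_left.mul_isLittleO hv_littleO.norm_left
  have hfixed : HasDerivWithinAt (fun α => B (f α) (v a)) (B f' (v a)) s a := by
    simpa [Function.comp_def] using (B.flip (v a)).hasFDerivAt.comp_hasDerivWithinAt a hf
  have hvanish : HasDerivWithinAt (fun α => B (f α) (v α - v a)) 0 s a := by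
    rw [hasDerivWithinAt_iff_isLittleO]
    simpa [hf0] using hremainder
  simpa using (hvanish.add hfixed).congr (fun α _ => by simp) (by simp)

section CurveLength

variable {F : Type*} [NormedAddCommGroup F] {φ' : ℝ → F}

theorem Gam_zero : Gam φ' 0 = 0 := by simp [Gam]

theorem Gam_one : Gam φ' 1 = 0 := by simp [Gam, len]

theorem intervalIntegrable_norm_of_continuousOn (hφ' : ContinuousOn φ' (Icc 0 1)) {α : ℝ}
    (hα : α ∈ Icc (0 : ℝ) 1) :
    IntervalIntegrable (fun s => ‖φ' s‖) MeasureTheory.volume 0 α :=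
  (hφ'.norm.mono (by rw [uIcc_of_le hα.1]; exact Icc_subset_Icc le_rfl hα.2)).intervalIntegrable

theorem len_pos (hφ' : ContinuousOn φ' (Icc 0 1)) (hne : ∀ α ∈ Icc (0 : ℝ) 1, φ' α ≠ 0) :
    0 < len φ' :=
  intervalIntegral.intervalIntegral_pos_of_pos_on
    (intervalIntegrable_norm_of_continuousOn hφ' (right_mem_Icc.2 zero_le_one))
    (fun _ hx => norm_pos_iff.2 (hne _ (Ioo_subset_Icc_self hx))) one_pos

theorem hasDerivWithinAt_Gam (hφ' : ContinuousOn φ' (Icc 0 1)) {α : ℝ}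
    (hα : α ∈ Icc (0 : ℝ) 1) :
    HasDerivWithinAt (Gam φ') (‖φ' α‖ - len φ') (Icc 0 1) α := by
  have : Fact (α ∈ Icc (0 : ℝ) 1) := ⟨hα⟩
  have hFTC : HasDerivWithinAt (fun u => ∫ s in (0 : ℝ)..u, ‖φ' s‖) ‖φ' α‖ (Icc 0 1) α :=
    intervalIntegral.integral_hasDerivWithinAt_right
      (intervalIntegrable_norm_of_continuousOn hφ' hα)
      (hφ'.norm.stronglyMeasurableAtFilter_nhdsWithin measurableSet_Icc α)
      (hφ'.norm.continuousWithinAt hα)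
  have h := hFTC.sub ((hasDerivWithinAt_id α _).mul_const (len φ'))
  rwa [one_mul] at h

theorem continuousOn_Gam (hφ' : ContinuousOn φ' (Icc 0 1)) :
    ContinuousOn (Gam φ') (Icc 0 1) :=
  fun _ hα => (hasDerivWithinAt_Gam hφ' hα).continuousWithinAt

end CurveLength

def sbarWeight (sbar α : ℝ) : ℝ := α * (α - 1) / (sbar * (sbar - 1))

theorem differentiable_sbarWeight (sbar : ℝ) : Differentiable ℝ (sbarWeight sbar) := by
  unfold sbarWeight
  fun_prop

def fopTangentCoeff (E : H → ℝ) (sbar σA σB : ℝ) (φ φ' : ℝ → H) (α : ℝ) : ℝ :=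
  (len φ')⁻¹ * ⟪sbarWeight sbar α • gradient E (φ sbar) - gradient E (φ α), φ' α⟫
    + (σA + σB) * (Gam φ' α - sbarWeight sbar α * Gam φ' sbar)

section MEPOperator

variable {E : H → ℝ} {sbar σA σB : ℝ} {φ φ' : ℝ → H} {a : ℝ}

theorem Fop_eq_gradient_add (hL : len φ' ≠ 0) (ha : φ' a ≠ 0) :
    Fop E sbar σA σB φ φ' a
      = gradient E (φ a) + fopTangentCoeff E sbar σA σB φ φ' a • (‖φ' a‖⁻¹ • φ' a) := by
  have hn : ‖φ' a‖ ≠ 0 := norm_ne_zero_iff.2 ha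
  simp only [Fop, Pperp, Pproj, fopTangentCoeff, sbarWeight, real_inner_smul_right,
    inner_sub_left, real_inner_smul_left, smul_smul]
  match_scalars
  · ring
  · field_simp
    ring

theorem fopTangentCoeff_eq_zero
    (hg : sbarWeight sbar a • gradient E (φ sbar) = gradient E (φ a))
    (hΓ : Gam φ' a = sbarWeight sbar a * Gam φ' sbar) :
    fopTangentCoeff E sbar σA σB φ φ' a = 0 := by
  simp [fopTangentCoeff, hg, hΓ]

theorem Fop_eq_gradient (hL : len φ' ≠ 0) (ha : φ' a ≠ 0)
    (hg : sbarWeight sbar a • gradient E (φ sbar) = gradient E (φ a))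
    (hΓ : Gam φ' a = sbarWeight sbar a * Gam φ' sbar) :
    Fop E sbar σA σB φ φ' a = gradient E (φ a) := by
  rw [Fop_eq_gradient_add hL ha, fopTangentCoeff_eq_zero hg hΓ, zero_smul, add_zero]

variable (hgrad : Differentiable ℝ (gradient E)) (hφ : C1On 0 1 φ φ')
  (hne : ∀ α ∈ Icc (0 : ℝ) 1, φ' α ≠ 0)
include hgrad hφ

theorem hasDerivWithinAt_gradient_comp (ha : a ∈ Icc (0 : ℝ) 1) :
    HasDerivWithinAt (fun α => gradient E (φ α)) (fderiv ℝ (gradient E) (φ a) (φ' a))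
      (Icc 0 1) a :=
  (hgrad (φ a)).hasFDerivAt.comp_hasDerivWithinAt a (hφ.1 a ha)

theorem continuousOn_gradient_comp : ContinuousOn (fun α => gradient E (φ α)) (Icc 0 1) :=
  fun _ hα => (hasDerivWithinAt_gradient_comp hgrad hφ hα).continuousWithinAt

theorem differentiableWithinAt_fopTangentCoeff (ha : a ∈ Icc (0 : ℝ) 1)
    (hg : sbarWeight sbar a • gradient E (φ sbar) = gradient E (φ a)) :
    DifferentiableWithinAt ℝ (fopTangentCoeff E sbar σA σB φ φ') (Icc 0 1) a := by
  have hw := (differentiable_sbarWeight sbar a).hasDerivAt.hasDerivWithinAt (s := Icc (0 : ℝ) 1)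
  have hinner := ((hw.smul_const (gradient E (φ sbar))).sub
      (hasDerivWithinAt_gradient_comp hgrad hφ ha)).clm_apply₂_of_eq_zero (innerSL ℝ)
    (sub_eq_zero.2 hg) (hφ.2.continuousWithinAt ha)
  exact (hinner.differentiableWithinAt.const_mul _).add
    (((hasDerivWithinAt_Gam hφ.2 ha).differentiableWithinAt.sub
      (hw.differentiableWithinAt.mul_const _)).const_mul _)

include hne

theorem continuousOn_Fop : ContinuousOn (Fop E sbar σA σB φ φ') (Icc 0 1) := by
  have hL := (len_pos hφ.2 hne).ne'
  have hw := (differentiable_sbarWeight sbar).continuous.continuousOn (s := Icc (0 : ℝ) 1)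
  have hcoeff : ContinuousOn (fopTangentCoeff E sbar σA σB φ φ') (Icc 0 1) :=
    (continuousOn_const.mul (((hw.smul continuousOn_const).sub
        (continuousOn_gradient_comp hgrad hφ)).inner hφ.2)).add
      (continuousOn_const.mul ((continuousOn_Gam hφ.2).sub (hw.mul continuousOn_const)))
  have hunit : ContinuousOn (fun α => ‖φ' α‖⁻¹ • φ' α) (Icc 0 1) :=
    (hφ.2.norm.inv₀ fun α hα => norm_ne_zero_iff.2 (hne α hα)).smul hφ.2
  exact ((continuousOn_gradient_comp hgrad hφ).add (hcoeff.smul hunit)).congr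
    fun α hα => Fop_eq_gradient_add hL (hne α hα)

theorem differentiableWithinAt_Fop (ha : a ∈ Icc (0 : ℝ) 1)
    (hg : sbarWeight sbar a • gradient E (φ sbar) = gradient E (φ a))
    (hΓ : Gam φ' a = sbarWeight sbar a * Gam φ' sbar) :
    DifferentiableWithinAt ℝ (Fop E sbar σA σB φ φ') (Icc 0 1) a := by
  have hL := (len_pos hφ.2 hne).ne'
  have hunit : ContinuousWithinAt (fun α => ‖φ' α‖⁻¹ • φ' α) (Icc 0 1) a :=
    ((hφ.2.continuousWithinAt ha).norm.inv₀ (norm_ne_zero_iff.2 (hne a ha))).smul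
      (hφ.2.continuousWithinAt ha)
  have htangential :=
    (differentiableWithinAt_fopTangentCoeff (σA := σA) (σB := σB) hgrad hφ ha hg).hasDerivWithinAt
      |>.clm_apply₂_of_eq_zero (ContinuousLinearMap.lsmul ℝ ℝ) (fopTangentCoeff_eq_zero hg hΓ)
        hunit
  exact ((hasDerivWithinAt_gradient_comp hgrad hφ ha).add htangential).differentiableWithinAt
    |>.congr (fun α hα => Fop_eq_gradient_add hL (hne α hα))
      (Fop_eq_gradient_add hL (hne a ha))

end MEPOperator

theorem stmt0_general
    (E : H → ℝ)
    (hess : H → H →L[ℝ] H) (hhess : ∀ y : H, HasFDerivAt (gradient E) (hess y) y)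
    (yA yB : H) (φb φb' φb'' : ℝ → H) (sbar : ℝ)
    (hA : AssumpA E hess yA yB φb φb' φb'' sbar)
    (σA σB : ℝ)
    (φ φ' : ℝ → H) (hφ : InU yA yB φ φ') :
    MemY sbar (Fop E sbar σA σB φ φ') := by
  obtain ⟨-, -, -, hsbar, ⟨hgA, -⟩, ⟨hgB, -⟩, -, -⟩ := hA
  obtain ⟨hC1, rfl, rfl, hne⟩ := hφ
  have hgrad : Differentiable ℝ (gradient E) := fun y => (hhess y).differentiableAt
  have hL := (len_pos hC1.2 hne).ne'
  have hw0 : sbarWeight sbar 0 = 0 := by simp [sbarWeight]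
  have hw1 : sbarWeight sbar 1 = 0 := by simp [sbarWeight]
  have hws : sbarWeight sbar sbar = 1 :=
    div_self (mul_ne_zero hsbar.1.ne' (sub_ne_zero.2 hsbar.2.ne))
  have h0 : (0 : ℝ) ∈ Icc (0 : ℝ) 1 := left_mem_Icc.2 zero_le_one
  have h1 : (1 : ℝ) ∈ Icc (0 : ℝ) 1 := right_mem_Icc.2 zero_le_one
  have hg0 : sbarWeight sbar 0 • gradient E (φ sbar) = gradient E (φ 0) := by simp [hw0, hgA]
  have hg1 : sbarWeight sbar 1 • gradient E (φ sbar) = gradient E (φ 1) := by simp [hw1, hgB]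
  have hΓ0 : Gam φ' 0 = sbarWeight sbar 0 * Gam φ' sbar := by simp [hw0, Gam_zero]
  have hΓ1 : Gam φ' 1 = sbarWeight sbar 1 * Gam φ' sbar := by simp [hw1, Gam_one]
  refine ⟨continuousOn_Fop hgrad hC1 hne, ?_, ?_, ?_, ?_, ?_⟩
  · rw [Fop_eq_gradient hL (hne 0 h0) hg0 hΓ0, hgA]
  · rw [Fop_eq_gradient hL (hne 1 h1) hg1 hΓ1, hgB]
  · exact differentiableWithinAt_Fop hgrad hC1 hne h0 hg0 hΓ0
  · exact differentiableWithinAt_Fop hgrad hC1 hne (Ioo_subset_Icc_self hsbar) (by simp [hws])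
      (by simp [hws])
  · exact differentiableWithinAt_Fop hgrad hC1 hne h1 hg1 hΓ1

theorem stmt0
    (E : H → ℝ) (hE : ContDiff ℝ 3 E)
    (hess : H → H →L[ℝ] H) (hhess : ∀ y : H, HasFDerivAt (gradient E) (hess y) y)
    (yA yB : H) (φb φb' φb'' : ℝ → H) (sbar : ℝ)
    (hA : AssumpA E hess yA yB φb φb' φb'' sbar)
    (σA σB : ℝ)
    (hσA : HasDerivWithinAt (lamBar E φb φb') σA (Icc (0:ℝ) 1) 0)
    (hσB : HasDerivWithinAt (lamBar E φb φb') σB (Icc (0:ℝ) 1) 1)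
    (φ φ' : ℝ → H) (hφ : InU yA yB φ φ') :
    MemY sbar (Fop E sbar σA σB φ φ') :=
  stmt0_general E hess hhess yA yB φb φb' φb'' sbar hA σA σB φ φ' hφ
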